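/- (Fluid age formula.) Let ϑ ∈ I, let ζ be the unique fluid model solution with initial measure ϑ, let w be the unique workload fluid model solution with w(0) = w_ϑ, define τ(t) = inf{s ∈ [0,t] : w(s) + s ≥ t}, and for 0 ≤ u ≤ t let H(t,u) = [0, max(w(t−u)−u, 0)] × [0,∞). Then for each 1 ≤ k ≤ K: if 0 ≤ u ≤ t < w(0), then ζ_k(t)(H(t,u)) = ϑ_k(H(t,u)_t) + λ_k ∫_u^t G_k(v) dv; and if t ≥ w(0) and 0 ≤ u ≤ t, then ζ_k(t)(H(t,u)) = λ_k ∫_u^{w(τ(t))} G_k(v) dv when u < w(τ(t)), and ζ_k(t)(H(t,u)) = 0 when w(τ(t)) ≤ u ≤ t. -/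

import Mathlib

open MeasureTheory Set Filter Topology
open scoped ENNReal

noncomputable section

namespace OverloadedFIFO

/-- The complement `G(x) = Γ((x, ∞))` of the cumulative distribution function of `Γ`. -/
def Gk (Γ : MeasureTheory.Measure ℝ) (x : ℝ) : ℝ := (Γ (Set.Ioi x)).toReal

/-- Model data: `K` job classes with arrival rates `lam`, service rates `mu`, and
deadline (patience) distributions `Γ`, in the overloaded regime `ρ > 1`.  Each `Γ k` is a
Borel probability measure on `[0,∞)` (no mass on negatives), with continuous c.d.f.
(no atoms, in particular `Γ k {0} = 0`) and finite mean. -/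
structure Data (K : ℕ) where
  lam : Fin K → ℝ
  mu : Fin K → ℝ
  Γ : Fin K → MeasureTheory.Measure ℝ
  lam_pos : ∀ k, 0 < lam k
  mu_pos : ∀ k, 0 < mu k
  Γ_prob : ∀ k, MeasureTheory.IsProbabilityMeasure (Γ k)
  Γ_null_neg : ∀ k, Γ k (Set.Iio 0) = 0
  Γ_noAtom : ∀ k, ∀ x : ℝ, Γ k {x} = 0
  Γ_finite_mean : ∀ k, MeasureTheory.Integrable id (Γ k)
  rho_gt_one : 1 < ∑ k, lam k / mu k

instance {K : ℕ} (D : Data K) (k : Fin K) : IsProbabilityMeasure (D.Γ k) := D.Γ_prob k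

/-- `ρ_k = λ_k / μ_k`. -/
def Data.rho {K : ℕ} (D : Data K) (k : Fin K) : ℝ := D.lam k / D.mu k

/-- `ρ = Σ_k ρ_k`. -/
def Data.rhoTot {K : ℕ} (D : Data K) : ℝ := ∑ k, D.rho k

/-- A workload fluid model solution: a nonnegative function `w` on `[0,∞)` satisfying
`w(t) = w(0) + Σ_k ρ_k ∫_0^t G_k(w(s)) ds − t` for all `t ≥ 0`. -/
def IsWorkloadSol {K : ℕ} (D : Data K) (w : ℝ → ℝ) : Prop :=
  (∀ t : ℝ, 0 ≤ t → 0 ≤ w t) ∧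
  (∀ k : Fin K, ∀ t : ℝ, 0 ≤ t →
    IntervalIntegrable (fun s => Gk (D.Γ k) (w s)) volume 0 t) ∧
  (∀ t : ℝ, 0 ≤ t →
    w t = w 0 + (∑ k, D.rho k * ∫ s in (0:ℝ)..t, Gk (D.Γ k) (w s)) - t)

/-- `w_l = sup {u ≥ 0 : Σ_k ρ_k G_k(u) > 1}`. -/
def wl {K : ℕ} (D : Data K) : ℝ :=
  sSup {u : ℝ | 0 ≤ u ∧ 1 < ∑ k, D.rho k * Gk (D.Γ k) u}

/-- `w_u = sup {u ≥ 0 : Σ_k ρ_k G_k(u) ≥ 1}`. -/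
def wu {K : ℕ} (D : Data K) : ℝ :=
  sSup {u : ℝ | 0 ≤ u ∧ 1 ≤ ∑ k, D.rho k * Gk (D.Γ k) u}

/-- `d_max = max_k sup {x ≥ 0 : G_k(x) > 0} ∈ (0,∞]`, as an extended nonnegative real. -/
def dmax {K : ℕ} (D : Data K) : ℝ≥0∞ :=
  ⨆ k, sSup (ENNReal.ofReal '' {x : ℝ | 0 ≤ x ∧ 0 < Gk (D.Γ k) x})

/-- `τ(t) = inf {s ∈ [0,t] : w(s) + s ≥ t}`. -/
def tauF (w : ℝ → ℝ) (t : ℝ) : ℝ := sInf {s : ℝ | 0 ≤ s ∧ s ≤ t ∧ t ≤ w s + s}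

/-- The nonnegative quadrant `[0,∞)²`. -/
def Q : Set (ℝ × ℝ) := {p | 0 ≤ p.1 ∧ 0 ≤ p.2}

/-- The shift `B_x = {y ∈ [0,∞)² : y − x ∈ B}` of a set `B ⊆ [0,∞)²`. -/
def shift (B : Set (ℝ × ℝ)) (x : ℝ × ℝ) : Set (ℝ × ℝ) :=
  {y | y ∈ Q ∧ (y.1 - x.1, y.2 - x.2) ∈ B}

/-- Diagonal shift `B_t = B_{(t,t)}`. -/
def shiftd (B : Set (ℝ × ℝ)) (t : ℝ) : Set (ℝ × ℝ) := shift B (t, t)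

/-- The set `C = ([0,∞)×{0}) ∪ ({0}×[0,∞))`. -/
def Cset : Set (ℝ × ℝ) := {p | (0 ≤ p.1 ∧ p.2 = 0) ∨ (p.1 = 0 ∧ 0 ≤ p.2)}

/-- The `κ`-enlargement `B^κ = {x ∈ [0,∞)² : inf_{y ∈ B} ‖x−y‖ < κ}` (Euclidean norm). -/
def enlarge (B : Set (ℝ × ℝ)) (κ : ℝ) : Set (ℝ × ℝ) :=
  {x | x ∈ Q ∧ ∃ y ∈ B, Real.sqrt ((x.1 - y.1) ^ 2 + (x.2 - y.2) ^ 2) < κ}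

/-- `w_ϑ = sup {x ≥ 0 : ϑ_+([x,∞)×[0,∞)) > 0}` for a `K`-tuple `ϑ` of measures on `[0,∞)²`. -/
def wMeas {K : ℕ} (ϑ : Fin K → MeasureTheory.Measure (ℝ × ℝ)) : ℝ :=
  sSup {x : ℝ | 0 ≤ x ∧ 0 < ∑ k, ϑ k (Set.Ici x ×ˢ Set.Ici (0:ℝ))}

/-- Membership in the set `I` of admissible initial measures: each `ϑ k` is a finite Borel
measure on `[0,∞)²`; (I.1) the superposition charges no corner set `C_x`, `x ∈ [0,∞)²`;
(I.2) `w_ϑ < ∞`; (I.3) `max_k G_k(w_ϑ − ε) > 0` for every `ε > 0`. -/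
def MemI {K : ℕ} (D : Data K) (ϑ : Fin K → MeasureTheory.Measure (ℝ × ℝ)) : Prop :=
  (∀ k, IsFiniteMeasure (ϑ k)) ∧
  (∀ k, ϑ k Qᶜ = 0) ∧
  (∀ x ∈ Q, (∑ k, ϑ k (shift Cset x)) = 0) ∧
  BddAbove {x : ℝ | 0 ≤ x ∧ 0 < ∑ k, ϑ k (Set.Ici x ×ˢ Set.Ici (0:ℝ))} ∧
  (∀ ε : ℝ, 0 < ε → ∃ k, 0 < Gk (D.Γ k) (wMeas ϑ - ε))

/-- `δ⁺_w`: the Dirac measure at `w` if `w > 0`, and the zero measure otherwise. -/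
def deltaPlus (w : ℝ) : MeasureTheory.Measure ℝ :=
  if 0 < w then MeasureTheory.Measure.dirac w else 0

instance (w : ℝ) : SFinite (deltaPlus w) := by
  unfold deltaPlus; split_ifs <;> infer_instance

/-- `(δ⁺_w × Γ)(B)`, as a real number. -/
def kern (Γ : MeasureTheory.Measure ℝ) (w : ℝ) (B : Set (ℝ × ℝ)) : ℝ :=
  (((deltaPlus w).prod Γ) B).toReal

/-- A (measure-valued) fluid model solution with initial measure `ϑ`: a family
`ζ(t) = (ζ_1(t),…,ζ_K(t))` of finite Borel measures on `[0,∞)²` with `ζ(0) = ϑ` satisfying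
`ζ_k(t)(B) = ϑ_k(B_t) + λ_k ∫_0^t (δ⁺_{w(s)} × Γ_k)(B_{t−s}) ds` for every Borel
`B ⊆ [0,∞)²` and `t ≥ 0`, where `w` is the (unique) workload fluid model solution with
`w(0) = w_ϑ`. -/
def IsFluidSol {K : ℕ} (D : Data K) (ϑ : Fin K → MeasureTheory.Measure (ℝ × ℝ))
    (ζ : ℝ → Fin K → MeasureTheory.Measure (ℝ × ℝ)) : Prop :=
  ∃ w : ℝ → ℝ, IsWorkloadSol D w ∧ w 0 = wMeas ϑ ∧
    (∀ t : ℝ, 0 ≤ t → ∀ k, IsFiniteMeasure (ζ t k) ∧ ζ t k Qᶜ = 0) ∧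
    (∀ k, ζ 0 k = ϑ k) ∧
    (∀ k, ∀ B : Set (ℝ × ℝ), B ⊆ Q → MeasurableSet B → ∀ t : ℝ, 0 ≤ t →
      IntervalIntegrable (fun s => kern (D.Γ k) (w s) (shiftd B (t - s))) volume 0 t ∧
      ζ t k B = ϑ k (shiftd B t) +
        ENNReal.ofReal (D.lam k * ∫ s in (0:ℝ)..t, kern (D.Γ k) (w s) (shiftd B (t - s))))

/-- The candidate invariant state `θ^w`:
`θ^w_k(B) = λ_k ∫_0^w Γ_k({p ≥ u : (w−u, p−u) ∈ B}) du`. -/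
def thetaW {K : ℕ} (D : Data K) (w : ℝ) (k : Fin K) : MeasureTheory.Measure (ℝ × ℝ) :=
  ENNReal.ofReal (D.lam k) •
    MeasureTheory.Measure.map (fun up : ℝ × ℝ => (w - up.1, up.2 - up.1))
      ((((MeasureTheory.volume.restrict (Set.Ioo (0:ℝ) w))).prod (D.Γ k)).restrict
        {up : ℝ × ℝ | up.1 ≤ up.2})

/-!
After the substitution `v = t - s`, the defining formula expresses `ζ_k(t)(H(t,u))` as the
initial term plus `λ_k` times the integral of `G_k(v)` over the ages `v ∈ (0,t]` whose remaining
wait `ψ(v) = w(t-v) - v` lies in `[0, max(ψ(u), 0)]`.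

The map `s ↦ w(s) + s` has derivative `Σ_k ρ_k G_k(w(s)) ≥ 0`, and it is strictly increasing:
on a flat stretch all `G_k` vanish at the current workload level, a level the workload can only
reach from above, so `w(0)` would exceed it, contradicting (I.3). Hence `ψ` is strictly
decreasing on `[0,t]` and the set of ages above is an interval: `[u,t]` when `t < w(0)`, since
then `ψ ≥ w(0) - t > 0`; `[u, w(τ(t))]` or the single point `w(τ(t))` when `t ≥ w(0)`, since
then `ψ(w(τ(t))) = 0`. In the latter case the initial term vanishes, because the shifted set
lies in `[w_ϑ, ∞) × [0, ∞)`, which `ϑ` does not charge by (I.1) and the definition of `w_ϑ`.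
-/

section SurvivalFunction

open ProbabilityTheory

variable {Γ : Measure ℝ}

lemma Gk_nonneg (x : ℝ) : 0 ≤ Gk Γ x := ENNReal.toReal_nonneg

lemma Gk_antitone [IsFiniteMeasure Γ] : Antitone (Gk Γ) := fun _ _ hab =>
  measureReal_mono (Ioi_subset_Ioi hab)

lemma Gk_eq_one_sub_cdf [IsProbabilityMeasure Γ] (x : ℝ) : Gk Γ x = 1 - cdf Γ x := by
  rw [cdf_eq_real, ← probReal_compl_eq_one_sub measurableSet_Iic, compl_Iic]
  rfl

lemma continuous_cdf_of_measure_singleton [IsProbabilityMeasure Γ] (hΓ : ∀ x, Γ {x} = 0) :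
    Continuous (cdf Γ) := by
  refine continuous_iff_continuousAt.2 fun x => ?_
  rw [(cdf Γ).mono.continuousAt_iff_leftLim_eq_rightLim, (cdf Γ).rightLim_eq]
  have hjump := (cdf Γ).measure_singleton x
  rw [measure_cdf, hΓ, eq_comm, ENNReal.ofReal_eq_zero, sub_nonpos] at hjump
  exact le_antisymm ((cdf Γ).mono.leftLim_le le_rfl) hjump

lemma continuous_Gk [IsProbabilityMeasure Γ] (hΓ : ∀ x, Γ {x} = 0) : Continuous (Gk Γ) := by
  simp_rw [funext Gk_eq_one_sub_cdf]
  exact continuous_const.sub (continuous_cdf_of_measure_singleton hΓ)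

end SurvivalFunction

namespace Data

variable {K : ℕ} (D : Data K)

def load (x : ℝ) : ℝ := ∑ k, D.rho k * Gk (D.Γ k) x

lemma rho_pos (k : Fin K) : 0 < D.rho k := div_pos (D.lam_pos k) (D.mu_pos k)

lemma load_nonneg (x : ℝ) : 0 ≤ D.load x :=
  Finset.sum_nonneg fun k _ => mul_nonneg (D.rho_pos k).le (Gk_nonneg x)

lemma load_antitone : Antitone D.load := fun _ _ hab =>
  Finset.sum_le_sum fun k _ => mul_le_mul_of_nonneg_left (Gk_antitone hab) (D.rho_pos k).le

lemma load_pos_of_Gk_pos {x : ℝ} {k : Fin K} (hk : 0 < Gk (D.Γ k) x) : 0 < D.load x :=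
  (mul_pos (D.rho_pos k) hk).trans_le <|
    Finset.single_le_sum (f := fun j => D.rho j * Gk (D.Γ j) x)
      (fun j _ => mul_nonneg (D.rho_pos j).le (Gk_nonneg x)) (Finset.mem_univ k)

end Data

namespace IsWorkloadSol

variable {K : ℕ} {D : Data K} {w : ℝ → ℝ}

lemma continuousOn_Icc (hw : IsWorkloadSol D w) (b : ℝ) : ContinuousOn w (Icc 0 b) := by
  rcases lt_or_ge b 0 with hb | hb
  · simp [Icc_eq_empty_of_lt hb]
  have hprim : ∀ k, ContinuousOn (fun r => ∫ s in (0:ℝ)..r, Gk (D.Γ k) (w s)) (Icc 0 b) :=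
    fun k => by
      simpa [uIcc_of_le hb] using
        intervalIntegral.continuousOn_primitive_interval' (hw.2.1 k b hb) left_mem_uIcc
  refine ContinuousOn.congr ?_ fun r hr => hw.2.2 r hr.1
  fun_prop

lemma continuousOn_Ici (hw : IsWorkloadSol D w) : ContinuousOn w (Ici 0) := fun x hx =>
  (hw.continuousOn_Icc (x + 1) x ⟨hx, by linarith⟩).mono_of_mem_nhdsWithin <|
    mem_nhdsWithin.2 ⟨Iio (x + 1), isOpen_Iio, by simp, fun _ hy => ⟨hy.2, hy.1.le⟩⟩

lemma hasDerivAt (hw : IsWorkloadSol D w) {t : ℝ} (ht : 0 < t) :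
    HasDerivAt w (D.load (w t) - 1) t := by
  have hGw : ∀ k, ContinuousOn (fun s => Gk (D.Γ k) (w s)) (Ioi 0) := fun k =>
    (continuous_Gk (D.Γ_noAtom k)).comp_continuousOn (hw.continuousOn_Ici.mono Ioi_subset_Ici_self)
  have hprim : ∀ k, HasDerivAt (fun r => ∫ s in (0:ℝ)..r, Gk (D.Γ k) (w s))
      (Gk (D.Γ k) (w t)) t := fun k =>
    intervalIntegral.integral_hasDerivAt_right (hw.2.1 k t ht.le)
      ((hGw k).stronglyMeasurableAtFilter isOpen_Ioi t ht)
      ((hGw k).continuousAt (Ioi_mem_nhds ht))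
  have hΦ := ((HasDerivAt.fun_sum (u := Finset.univ) fun k _ =>
    (hprim k).const_mul (D.rho k)).const_add (w 0)).fun_sub (hasDerivAt_id t)
  refine hΦ.congr_of_eventuallyEq ?_
  filter_upwards [Ioi_mem_nhds ht] with r hr using hw.2.2 r hr.le

lemma hasDerivAt_add_id (hw : IsWorkloadSol D w) {t : ℝ} (ht : 0 < t) :
    HasDerivAt (fun s => w s + s) (D.load (w t)) t := by
  simpa using (hw.hasDerivAt ht).fun_add (hasDerivAt_id t)

lemma continuousOn_add_id (hw : IsWorkloadSol D w) {s : Set ℝ} (hs : s ⊆ Ici 0) :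
    ContinuousOn (fun s => w s + s) s :=
  (hw.continuousOn_Ici.mono hs).add continuousOn_id

lemma monotoneOn_add_id (hw : IsWorkloadSol D w) : MonotoneOn (fun s => w s + s) (Ici 0) := by
  refine monotoneOn_of_hasDerivWithinAt_nonneg (convex_Ici 0) (hw.continuousOn_add_id le_rfl)
    (fun x hx => ?_) fun x _ => D.load_nonneg (w x)
  rw [interior_Ici] at hx ⊢
  exact (hw.hasDerivAt_add_id hx).hasDerivWithinAt

/-- `(w₁ - w₂)²` is nonincreasing because the load is antitone. -/
lemma eqOn_of_apply_zero_eq {w₁ w₂ : ℝ → ℝ} (h₁ : IsWorkloadSol D w₁) (h₂ : IsWorkloadSol D w₂)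
    (h0 : w₁ 0 = w₂ 0) : EqOn w₁ w₂ (Ici 0) := by
  have hanti : AntitoneOn (fun s => (w₁ s - w₂ s) ^ 2) (Ici 0) := by
    refine antitoneOn_of_hasDerivWithinAt_nonpos (convex_Ici 0)
      (f' := fun x => 2 * (w₁ x - w₂ x) * (D.load (w₁ x) - D.load (w₂ x)))
      ((h₁.continuousOn_Ici.sub h₂.continuousOn_Ici).pow 2) (fun x hx => ?_) (fun x _ => ?_)
    · rw [interior_Ici] at hx ⊢
      refine (((h₁.hasDerivAt hx).fun_sub (h₂.hasDerivAt hx)).fun_pow 2).hasDerivWithinAt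
        |>.congr_deriv (by norm_num)
    · rcases le_total (w₁ x) (w₂ x) with h | h <;>
        nlinarith [D.load_antitone h]
  intro t ht
  have := hanti (le_refl (0:ℝ)) ht ht
  norm_num [h0] at this
  linarith

/-- Where the load vanishes the workload decreases at unit rate, so it can never climb up to
such a level from below. -/
lemma lt_apply_zero_of_load_eq_zero (hw : IsWorkloadSol D w) {c s : ℝ} (hs : 0 ≤ s)
    (hc : D.load c = 0) (hcs : c < w s) : c < w 0 := by
  by_contra! h0
  set A := Icc 0 s ∩ w ⁻¹' Iic c
  have hA : IsClosed A := (hw.continuousOn_Icc s).preimage_isClosed_of_isClosed isClosed_Icc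
    isClosed_Iic
  have hA0 : (0 : ℝ) ∈ A := ⟨⟨le_rfl, hs⟩, h0⟩
  have hAbdd : BddAbove A := ⟨s, fun x hx => hx.1.2⟩
  set σ := sSup A
  obtain ⟨⟨hσ0, hσs⟩, hσc⟩ : σ ∈ A := hA.csSup_mem ⟨0, hA0⟩ hAbdd
  have hload : ∀ x ∈ Ioo σ s, D.load (w x) = 0 := fun x hx => by
    have hx : c < w x := by
      by_contra! hxc
      exact (le_csSup hAbdd ⟨⟨hσ0.trans hx.1.le, hx.2.le⟩, hxc⟩).not_gt hx.1
    exact le_antisymm (hc ▸ D.load_antitone hx.le) (D.load_nonneg _)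
  have hanti : AntitoneOn (fun s => w s + s) (Icc σ s) := by
    refine antitoneOn_of_hasDerivWithinAt_nonpos (convex_Icc σ s) (f' := fun x => D.load (w x))
      (hw.continuousOn_add_id fun x hx => hσ0.trans hx.1) (fun x hx => ?_) fun x hx => ?_
    all_goals rw [interior_Icc] at hx
    · exact (hw.hasDerivAt_add_id (hσ0.trans_lt hx.1)).hasDerivWithinAt
    · exact (hload x hx).le
  have := hanti ⟨le_rfl, hσs⟩ ⟨hσs, le_rfl⟩ hσs
  simp only [mem_preimage, mem_Iic] at hσc
  linarith

lemma strictMonoOn_add_id (hw : IsWorkloadSol D w)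
    (hI3 : ∀ ε : ℝ, 0 < ε → ∃ k, 0 < Gk (D.Γ k) (w 0 - ε)) :
    StrictMonoOn (fun s => w s + s) (Ici 0) := by
  intro s₁ (hs₁ : 0 ≤ s₁) s₂ hs₂ h12
  refine (hw.monotoneOn_add_id hs₁ hs₂ h12.le).lt_of_ne fun heq => ?_
  have hconst : ∀ x ∈ Icc s₁ s₂, w x + x = w s₁ + s₁ := fun x hx =>
    le_antisymm ((hw.monotoneOn_add_id (hs₁.trans hx.1) hs₂ hx.2).trans_eq heq.symm)
      (hw.monotoneOn_add_id hs₁ (hs₁.trans hx.1) hx.1)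
  set σ := (s₁ + s₂) / 2 with hσ_def
  set σ' := (s₁ + σ) / 2 with hσ'_def
  have hσ : σ ∈ Ioo s₁ s₂ := ⟨by linarith, by linarith⟩
  have hload : D.load (w σ) = 0 := by
    refine (hw.hasDerivAt_add_id (lt_of_le_of_lt hs₁ hσ.1)).unique
      ((hasDerivAt_const σ (w s₁ + s₁)).congr_of_eventuallyEq ?_)
    filter_upwards [Ioo_mem_nhds hσ.1 hσ.2] with x hx using hconst x ⟨hx.1.le, hx.2.le⟩
  have hσσ' : w σ < w σ' := by
    linarith [hconst σ ⟨hσ.1.le, hσ.2.le⟩, hconst σ' ⟨by linarith, by linarith⟩]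
  obtain ⟨k, hk⟩ := hI3 (w 0 - w σ) (sub_pos.2 <|
    hw.lt_apply_zero_of_load_eq_zero (by linarith) hload hσσ')
  rw [sub_sub_cancel] at hk
  exact (D.load_pos_of_Gk_pos hk).ne' hload

lemma tauF_spec (hw : IsWorkloadSol D w) {t : ℝ} (ht : w 0 ≤ t) :
    tauF w t ∈ Icc 0 t ∧ w (tauF w t) + tauF w t = t := by
  have ht0 : 0 ≤ t := (hw.1 0 le_rfl).trans ht
  set S := {s : ℝ | 0 ≤ s ∧ s ≤ t ∧ t ≤ w s + s}
  have hS : S = Icc 0 t ∩ (fun s => w s + s) ⁻¹' Ici t := by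
    ext s; simp [S, and_assoc]
  have hSbdd : BddBelow S := ⟨0, fun s hs => hs.1⟩
  obtain ⟨hτ0, hτt, hτ⟩ : tauF w t ∈ S := by
    refine (hS ▸ (hw.continuousOn_add_id Icc_subset_Ici_self).preimage_isClosed_of_isClosed
      isClosed_Icc isClosed_Ici).csInf_mem ⟨t, ht0, le_rfl, by linarith [hw.1 t ht0]⟩ hSbdd
  obtain ⟨s, ⟨hs0, hsτ⟩, hs⟩ := intermediate_value_Icc hτ0
    (hw.continuousOn_add_id Icc_subset_Ici_self) ⟨by simpa using ht, hτ⟩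
  have hτs : tauF w t ≤ s := csInf_le hSbdd ⟨hs0, hsτ.trans hτt, hs.ge⟩
  exact ⟨⟨hτ0, hτt⟩, le_antisymm hsτ hτs ▸ hs⟩

lemma strictAntiOn_sub_sub (hw : IsWorkloadSol D w)
    (hI3 : ∀ ε : ℝ, 0 < ε → ∃ k, 0 < Gk (D.Γ k) (w 0 - ε)) (t : ℝ) :
    StrictAntiOn (fun v => w (t - v) - v) (Icc 0 t) := fun v₁ hv₁ v₂ hv₂ h => by
  have := hw.strictMonoOn_add_id hI3 (show 0 ≤ t - v₂ by linarith [hv₂.2])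
    (show 0 ≤ t - v₁ by linarith [hv₁.2]) (by linarith)
  simp only at this ⊢
  linarith

end IsWorkloadSol

lemma shiftd_Icc_prod_Ici {m r : ℝ} (hr : 0 ≤ r) :
    shiftd (Icc 0 m ×ˢ Ici 0) r = Icc r (m + r) ×ˢ Ici r := by
  ext ⟨y₁, y₂⟩
  simp only [shiftd, shift, Q, mem_ofPred_eq, mem_prod, mem_Icc, mem_Ici]
  constructor
  · rintro ⟨-, ⟨h₁, h₂⟩, h₃⟩
    exact ⟨⟨by linarith, by linarith⟩, by linarith⟩
  · rintro ⟨⟨h₁, h₂⟩, h₃⟩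
    exact ⟨⟨by linarith, by linarith⟩, ⟨by linarith, by linarith⟩, by linarith⟩

lemma kern_prod_of_subset_Ioi {Γ : Measure ℝ} [SFinite Γ] {A : Set ℝ} (hA : MeasurableSet A)
    (hA0 : A ⊆ Ioi 0) (B : Set ℝ) (a : ℝ) :
    kern Γ a (A ×ˢ B) = A.indicator (fun _ => (Γ B).toReal) a := by
  by_cases ha : a ∈ A
  · simp [kern, deltaPlus, show 0 < a from hA0 ha, Measure.prod_prod, Measure.dirac_apply' _ hA,
      ha]
  · by_cases ha0 : 0 < a <;>
      simp [kern, deltaPlus, ha0, Measure.prod_prod, Measure.dirac_apply' _ hA, ha]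

lemma integral_ite_eq_of_forall_iff {f : ℝ → ℝ} {P : ℝ → Prop} [DecidablePred P] {a b t : ℝ}
    (ha : 0 ≤ a) (hab : a ≤ b) (hbt : b ≤ t) (hP : ∀ v ∈ Ioc 0 t, P v ↔ v ∈ Icc a b) :
    ∫ v in (0:ℝ)..t, (if P v then f v else 0) = ∫ v in a..b, f v := by
  have hae : ∀ᵐ v, v ∈ uIoc 0 t → (if P v then f v else 0) = (Ioc a b).indicator f v := by
    filter_upwards [measure_eq_zero_iff_ae_notMem.1 (measure_singleton (μ := volume) a)]
      with v (hva : v ≠ a) hv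
    rw [uIoc_of_le (ha.trans (hab.trans hbt))] at hv
    have : v ∈ Icc a b ↔ v ∈ Ioc a b :=
      ⟨fun h => ⟨h.1.lt_of_ne' hva, h.2⟩, fun h => ⟨h.1.le, h.2⟩⟩
    by_cases hPv : P v
    · simp [hPv, indicator_of_mem (this.1 ((hP v hv).1 hPv))]
    · simp [hPv, indicator_of_notMem (fun h => hPv ((hP v hv).2 (this.2 h)))]
  rw [intervalIntegral.integral_congr_ae hae,
    intervalIntegral.integral_of_le (ha.trans (hab.trans hbt)),
    setIntegral_indicator measurableSet_Ioc, Ioc_inter_Ioc, max_eq_right ha, min_eq_right hbt,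
    intervalIntegral.integral_of_le hab]

lemma _root_.StrictAntiOn.integral_ite_mem_Icc {ψ f : ℝ → ℝ} {t a b lo : ℝ}
    (hψ : StrictAntiOn ψ (Icc 0 t)) (ha : 0 ≤ a) (hab : a ≤ b) (hbt : b ≤ t)
    (hlo : ∀ v ∈ Icc 0 t, lo ≤ ψ v ↔ v ≤ b) :
    ∫ v in (0:ℝ)..t, (if ψ v ∈ Icc lo (ψ a) then f v else 0) = ∫ v in a..b, f v := by
  refine integral_ite_eq_of_forall_iff ha hab hbt fun v hv => ?_
  have hv' : v ∈ Icc 0 t := ⟨hv.1.le, hv.2⟩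
  rw [mem_Icc, mem_Icc, hlo v hv', hψ.le_iff_ge hv' ⟨ha, hab.trans hbt⟩, and_comm]

namespace MemI

variable {K : ℕ} {D : Data K} {ϑ : Fin K → Measure (ℝ × ℝ)}

lemma measure_singleton_prod_Ici (hϑ : MemI D ϑ) (k : Fin K) {x : ℝ} (hx : 0 ≤ x) :
    ϑ k ({x} ×ˢ Ici 0) = 0 := by
  have hsub : {x} ×ˢ Ici (0:ℝ) ⊆ shift Cset (x, 0) := by
    rintro ⟨y₁, y₂⟩ ⟨rfl, hy : 0 ≤ y₂⟩
    exact ⟨⟨hx, hy⟩, Or.inr ⟨sub_self _, by simpa using hy⟩⟩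
  refine measure_mono_null hsub ?_
  exact (Finset.sum_eq_zero_iff.1 (hϑ.2.2.1 (x, 0) ⟨hx, le_rfl⟩)) k (Finset.mem_univ k)

lemma measure_Ici_prod_Ici_of_wMeas_lt (hϑ : MemI D ϑ) (k : Fin K) {x : ℝ} (hx0 : 0 ≤ x)
    (hx : wMeas ϑ < x) : ϑ k (Ici x ×ˢ Ici 0) = 0 := by
  by_contra h
  have hpos : 0 < ∑ j, ϑ j (Ici x ×ˢ Ici (0:ℝ)) := (pos_iff_ne_zero.2 h).trans_le <|
    Finset.single_le_sum (f := fun j => ϑ j (Ici x ×ˢ Ici (0:ℝ))) (fun _ _ => zero_le)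
      (Finset.mem_univ k)
  exact (le_csSup hϑ.2.2.2.1 ⟨hx0, hpos⟩).not_gt hx

lemma measure_Ici_prod_Ici_of_wMeas_le (hϑ : MemI D ϑ) (k : Fin K) {x : ℝ} (hx0 : 0 ≤ x)
    (hx : wMeas ϑ ≤ x) : ϑ k (Ici x ×ˢ Ici 0) = 0 := by
  have hsub : Ici x ×ˢ Ici (0:ℝ) ⊆
      {x} ×ˢ Ici 0 ∪ ⋃ n : ℕ, Ici (x + (n + 1 : ℝ)⁻¹) ×ˢ Ici 0 := by
    rintro ⟨y₁, y₂⟩ ⟨hy₁ : x ≤ y₁, hy₂⟩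
    rcases hy₁.eq_or_lt with rfl | hlt
    · exact Or.inl ⟨rfl, hy₂⟩
    · obtain ⟨n, hn⟩ := exists_nat_one_div_lt (sub_pos.2 hlt)
      rw [one_div] at hn
      exact Or.inr (mem_iUnion.2 ⟨n, show x + _ ≤ y₁ by linarith, hy₂⟩)
  refine measure_mono_null hsub (measure_union_null (hϑ.measure_singleton_prod_Ici k hx0) ?_)
  refine measure_iUnion_null fun n => hϑ.measure_Ici_prod_Ici_of_wMeas_lt k (by positivity) ?_
  linarith [show (0:ℝ) < (n + 1 : ℝ)⁻¹ by positivity]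

lemma measure_shiftd_eq_zero_of_wMeas_le (hϑ : MemI D ϑ) (k : Fin K) (m : ℝ) {t : ℝ}
    (ht0 : 0 ≤ t) (ht : wMeas ϑ ≤ t) : ϑ k (shiftd (Icc 0 m ×ˢ Ici 0) t) = 0 := by
  rw [shiftd_Icc_prod_Ici ht0]
  exact measure_mono_null (prod_mono Icc_subset_Ici_self (Ici_subset_Ici.2 ht0))
    (hϑ.measure_Ici_prod_Ici_of_wMeas_le k ht0 ht)

end MemI

lemma IsFluidSol.measure_Icc_prod_Ici {K : ℕ} {D : Data K} {ϑ : Fin K → Measure (ℝ × ℝ)}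
    {ζ : ℝ → Fin K → Measure (ℝ × ℝ)} {w : ℝ → ℝ} (hζ : IsFluidSol D ϑ ζ)
    (hw : IsWorkloadSol D w) (hw0 : w 0 = wMeas ϑ) (k : Fin K) {t m : ℝ} (ht : 0 ≤ t) :
    ζ t k (Icc 0 m ×ˢ Ici 0) = ϑ k (shiftd (Icc 0 m ×ˢ Ici 0) t) +
      ENNReal.ofReal (D.lam k *
        ∫ v in (0:ℝ)..t, if w (t - v) - v ∈ Icc 0 m then Gk (D.Γ k) v else 0) := by
  obtain ⟨w', hw', hw'0, -, -, hform⟩ := hζ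
  have hww' : EqOn w' w (Ici 0) := hw'.eqOn_of_apply_zero_eq hw (hw'0.trans hw0.symm)
  rw [(hform k _ (fun y hy => ⟨hy.1.1, hy.2⟩) (measurableSet_Icc.prod measurableSet_Ici) t ht).2]
  congr 3
  set F : ℝ → ℝ := fun v => kern (D.Γ k) (w' (t - v)) (shiftd (Icc 0 m ×ˢ Ici 0) v)
  have hF : ∀ s, kern (D.Γ k) (w' s) (shiftd (Icc 0 m ×ˢ Ici 0) (t - s)) = F (t - s) := by
    simp [F]
  simp_rw [hF, intervalIntegral.integral_comp_sub_left F t, sub_self, sub_zero]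
  refine intervalIntegral.integral_congr_ae (ae_of_all _ fun v hv => ?_)
  rw [uIoc_of_le ht] at hv
  have hIcc : Icc v (m + v) ⊆ Ioi 0 := fun y hy => hv.1.trans_le hy.1
  simp only [F, shiftd_Icc_prod_Ici hv.1.le, kern_prod_of_subset_Ioi measurableSet_Icc hIcc,
    hww' (show 0 ≤ t - v by linarith [hv.2]), sub_mem_Icc_iff_left, zero_add]
  rw [measure_congr (Ioi_ae_eq_Ici' (D.Γ_noAtom k v)).symm, indicator_apply]
  rfl

/-- Fluid age formula: with `H(t,u) = [0, max(w(t−u)−u, 0)] × [0,∞)`,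
for each `k`: if `0 ≤ u ≤ t < w(0)`, then
`ζ_k(t)(H(t,u)) = ϑ_k(H(t,u)_t) + λ_k ∫_u^t G_k(v) dv`; if `t ≥ w(0)` and `0 ≤ u ≤ t`,
then `ζ_k(t)(H(t,u)) = λ_k ∫_u^{w(τ(t))} G_k(v) dv` when `u < w(τ(t))`, and
`ζ_k(t)(H(t,u)) = 0` when `w(τ(t)) ≤ u`. -/
theorem fluid_age_formula {K : ℕ} (D : Data K)
    (ϑ : Fin K → MeasureTheory.Measure (ℝ × ℝ)) (hϑ : MemI D ϑ)
    (ζ : ℝ → Fin K → MeasureTheory.Measure (ℝ × ℝ)) (hζ : IsFluidSol D ϑ ζ)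
    (w : ℝ → ℝ) (hw : IsWorkloadSol D w) (hw0 : w 0 = wMeas ϑ) :
    ∀ k,
      (∀ t u : ℝ, 0 ≤ u → u ≤ t → t < w 0 →
        ζ t k (Set.Icc (0:ℝ) (max (w (t - u) - u) 0) ×ˢ Set.Ici (0:ℝ)) =
          ϑ k (shiftd (Set.Icc (0:ℝ) (max (w (t - u) - u) 0) ×ˢ Set.Ici (0:ℝ)) t) +
            ENNReal.ofReal (D.lam k * ∫ v in u..t, Gk (D.Γ k) v)) ∧
      (∀ t u : ℝ, w 0 ≤ t → 0 ≤ u → u ≤ t →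
        (u < w (tauF w t) →
          ζ t k (Set.Icc (0:ℝ) (max (w (t - u) - u) 0) ×ˢ Set.Ici (0:ℝ)) =
            ENNReal.ofReal (D.lam k * ∫ v in u..(w (tauF w t)), Gk (D.Γ k) v)) ∧
        (w (tauF w t) ≤ u →
          ζ t k (Set.Icc (0:ℝ) (max (w (t - u) - u) 0) ×ˢ Set.Ici (0:ℝ)) = 0)) := by
  have hI3 : ∀ ε : ℝ, 0 < ε → ∃ k, 0 < Gk (D.Γ k) (w 0 - ε) := hw0 ▸ hϑ.2.2.2.2
  intro k
  refine ⟨fun t u hu hut htw => ?_, fun t u hwt hu hut => ?_⟩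
  · have ht0 : 0 ≤ t := hu.trans hut
    have hψ := hw.strictAntiOn_sub_sub hI3 t
    have hψt : ∀ v ∈ Icc 0 t, w 0 - t ≤ w (t - v) - v := fun v hv => by
      simpa using hψ.antitoneOn hv ⟨ht0, le_rfl⟩ hv.2
    rw [hζ.measure_Icc_prod_Ici hw hw0 k ht0, max_eq_left (by linarith [hψt u ⟨hu, hut⟩]),
      hψ.integral_ite_mem_Icc hu hut le_rfl fun v hv => iff_of_true (by linarith [hψt v hv]) hv.2]
  · obtain ⟨⟨hτ0, hτt⟩, hτ⟩ := hw.tauF_spec hwt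
    have ht0 : 0 ≤ t := hτ0.trans hτt
    have hψ := hw.strictAntiOn_sub_sub hI3 t
    set v₀ := w (tauF w t)
    have hv₀ : v₀ ∈ Icc 0 t := ⟨hw.1 _ hτ0, by linarith⟩
    have hψv₀ : w (t - v₀) - v₀ = 0 := by rw [show t - v₀ = tauF w t by linarith, sub_self]
    have hlo : ∀ v ∈ Icc 0 t, 0 ≤ w (t - v) - v ↔ v ≤ v₀ := fun v hv => by
      simpa [hψv₀] using hψ.le_iff_ge hv₀ hv
    rw [hζ.measure_Icc_prod_Ici hw hw0 k ht0,
      hϑ.measure_shiftd_eq_zero_of_wMeas_le k _ ht0 (hw0 ▸ hwt), zero_add]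
    refine ⟨fun huv => ?_, fun hvu => ?_⟩
    · rw [max_eq_left ((hlo u ⟨hu, hut⟩).2 huv.le),
        hψ.integral_ite_mem_Icc hu huv.le hv₀.2 hlo]
    · have hmax : max (w (t - u) - u) 0 = w (t - v₀) - v₀ := by
        rw [hψv₀, max_eq_right]
        simpa [hψv₀] using hψ.antitoneOn hv₀ ⟨hu, hut⟩ hvu
      rw [hmax, hψ.integral_ite_mem_Icc hv₀.1 le_rfl hv₀.2 hlo, intervalIntegral.integral_same,
        mul_zero, ENNReal.ofReal_zero]

end OverloadedFIFO
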